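/- Define G : ℂ² → ℂ by G(a,b) = 1 − (1/π) ∫_ℂ phase(conj(z+a)) phase(z+b) e^{−|z|²} d²z, the integral being with respect to Lebesgue measure on ℂ. Then there exists a constant c₁ > 0 such that for all a, b ∈ ℂ: |Re G(a,b)| ≤ c₁ |a−b|² max(1, log(|a−b|^{−1})) and |Im G(a,b)| ≤ c₁ |a−b|. -/

import Mathlib

open MeasureTheory Real Set

noncomputable section

/-- phase of a complex number: z/|z|, with phase(0)=1. -/
def phase (z : ℂ) : ℂ := if z = 0 then 1 else z / ((‖z‖ : ℝ) : ℂ)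

/-- G(a,b) = 1 − (1/π) ∫_ℂ phase(conj(z+a)) phase(z+b) e^{−|z|²} d²z. -/
def Gfun (a b : ℂ) : ℂ :=
  1 - (1 / (Real.pi : ℂ)) *
    ∫ z : ℂ, phase ((starRingEnd ℂ) (z + a)) * phase (z + b) *
      (Real.exp (-‖z‖ ^ 2) : ℂ)

lemma abs_phase (z : ℂ) : ‖phase z‖ = 1 := by
  unfold phase
  split_ifs with h
  · simp
  · rw [norm_div, Complex.norm_real, Real.norm_eq_abs, _root_.abs_of_nonneg (norm_nonneg z),
      div_self (by simpa using h)]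

lemma measurable_phase : Measurable phase := by
  unfold phase
  apply Measurable.ite (measurableSet_singleton 0) measurable_const
  exact measurable_id.div ((Complex.continuous_ofReal.comp continuous_norm).measurable)

def gauss (z : ℂ) : ℝ := Real.exp (-‖z‖ ^ 2)

lemma gauss_pos (z : ℂ) : 0 < gauss z := Real.exp_pos _
lemma gauss_le_one (z : ℂ) : gauss z ≤ 1 := by
  unfold gauss
  rw [← Real.exp_zero]
  exact Real.exp_le_exp.2 (neg_nonpos.2 (by positivity))

lemma integrable_gauss : Integrable gauss := by
  have h := Complex.volume_preserving_equiv_real_prod.symm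
  rw [← h.integrable_comp_emb Complex.measurableEquivRealProd.symm.measurableEmbedding]
  have : (gauss ∘ Complex.measurableEquivRealProd.symm) =
      fun p : ℝ × ℝ => Real.exp (-p.1^2) * Real.exp (-p.2^2) := by
    ext p
    simp only [Function.comp_apply, gauss, Complex.measurableEquivRealProd_symm_apply]
    rw [← Real.exp_add, Complex.sq_norm, Complex.normSq_mk]
    ring_nf
  rw [this]
  have h1 : Integrable (fun x : ℝ => Real.exp (-x^2)) := by
    simpa using integrable_exp_neg_mul_sq (b := 1) one_pos
  exact h1.mul_prod h1

lemma integral_gauss : ∫ z : ℂ, gauss z = π := by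
  have h := Complex.volume_preserving_equiv_real_prod.symm
  rw [← h.integral_comp Complex.measurableEquivRealProd.symm.measurableEmbedding]
  have : (fun p : ℝ × ℝ => gauss (Complex.measurableEquivRealProd.symm p)) =
      fun p : ℝ × ℝ => Real.exp (-p.1^2) * Real.exp (-p.2^2) := by
    ext p
    simp only [gauss, Complex.measurableEquivRealProd_symm_apply]
    rw [← Real.exp_add, Complex.sq_norm, Complex.normSq_mk]
    ring_nf
  rw [this, MeasureTheory.Measure.volume_eq_prod,
    MeasureTheory.integral_prod_mul (fun x : ℝ => Real.exp (-x^2)) (fun x : ℝ => Real.exp (-x^2))]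
  have := integral_gaussian 1
  simp only [neg_mul, one_mul] at this
  rw [this, div_one, Real.mul_self_sqrt pi_pos.le]

lemma radial (f : ℝ → ℝ) :
    ∫ z : ℂ, f (‖z‖) = 2 * π * ∫ y in Ioi (0:ℝ), y * f y := by
  have h := MeasureTheory.integral_fun_norm_addHaar (volume : Measure ℂ) f
  rw [h, Complex.finrank_real_complex]
  rw [measureReal_def, Complex.volume_ball]
  simp only [ENNReal.toReal_mul, ENNReal.toReal_one, one_pow, ENNReal.toReal_pow,
    ENNReal.toReal_ofReal zero_le_one, ENNReal.coe_toReal, NNReal.coe_real_pi, one_mul,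
    smul_eq_mul, nsmul_eq_mul, Nat.cast_ofNat, pow_one]
  rw [← integral_const_mul,
    show (2:ℝ) * π * ∫ (y : ℝ) in Ioi 0, y * f y = ∫ (y:ℝ) in Ioi 0, 2*π*(y*f y) from
      (integral_const_mul _ _).symm, ← integral_const_mul]
  apply setIntegral_congr_fun measurableSet_Ioi
  intro y _
  ring

def annF (r : ℝ) : ℝ → ℝ := (Icc r 1).indicator (fun y => (y^2)⁻¹)
def balF (r : ℝ) : ℝ → ℝ := (Icc r 1).indicator (fun y => y⁻¹)

lemma annF_nonneg {r : ℝ} (hr : 0 < r) (y : ℝ) : 0 ≤ annF r y := by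
  unfold annF; apply Set.indicator_nonneg; intro y _; positivity

lemma balF_nonneg {r : ℝ} (hr : 0 < r) (y : ℝ) : 0 ≤ balF r y := by
  unfold balF
  apply Set.indicator_nonneg
  intro y hy
  have : 0 < y := lt_of_lt_of_le hr hy.1
  positivity

lemma annF_le {r : ℝ} (hr : 0 < r) (y : ℝ) : annF r y ≤ (r^2)⁻¹ := by
  unfold annF
  by_cases h : y ∈ Icc r 1
  · rw [Set.indicator_of_mem h]
    apply inv_anti₀ (by positivity)
    exact pow_le_pow_left₀ hr.le h.1 2
  · rw [Set.indicator_of_notMem h]; positivity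

lemma balF_le {r : ℝ} (hr : 0 < r) (y : ℝ) : balF r y ≤ r⁻¹ := by
  unfold balF
  by_cases h : y ∈ Icc r 1
  · rw [Set.indicator_of_mem h]
    exact inv_anti₀ hr h.1
  · rw [Set.indicator_of_notMem h]; positivity

lemma measurable_annF (r : ℝ) : Measurable (annF r) :=
  Measurable.indicator (by fun_prop) measurableSet_Icc

lemma measurable_balF (r : ℝ) : Measurable (balF r) :=
  Measurable.indicator (by fun_prop) measurableSet_Icc

/-- integrability of bounded functions vanishing outside a closed ball -/
lemma integrable_of_bounded_support {g : ℂ → ℝ} (hm : AEStronglyMeasurable g volume) (C : ℝ)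
    (hb : ∀ z, |g z| ≤ C) (c : ℂ) (R : ℝ) (h0 : ∀ z, z ∉ Metric.closedBall c R → g z = 0) :
    Integrable g := by
  have hg : g = (Metric.closedBall c R).indicator g := by
    ext z
    by_cases h : z ∈ Metric.closedBall c R
    · rw [Set.indicator_of_mem h]
    · rw [Set.indicator_of_notMem h, h0 z h]
  rw [hg, integrable_indicator_iff measurableSet_closedBall]
  exact Measure.integrableOn_of_bounded measure_closedBall_lt_top.ne hm
    (ae_of_all _ fun z => hb z)

lemma integrable_annF_comp {r : ℝ} (hr : 0 < r) (a : ℂ) :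
    Integrable (fun z : ℂ => annF r (‖z + a‖)) := by
  refine integrable_of_bounded_support ?_ ((r^2)⁻¹) ?_ (-a) 1 ?_
  · exact (((measurable_annF r).comp
      (continuous_norm.measurable.comp (measurable_add_const a)))).aestronglyMeasurable
  · intro z
    rw [abs_of_nonneg (annF_nonneg hr _)]; exact annF_le hr _
  · intro z hz
    rw [Metric.mem_closedBall, not_le, Complex.dist_eq, sub_neg_eq_add] at hz
    exact Set.indicator_of_notMem (fun h => absurd h.2 (not_le.2 hz)) _

lemma integrable_balF_comp {r : ℝ} (hr : 0 < r) (a : ℂ) :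
    Integrable (fun z : ℂ => balF r (‖z + a‖)) := by
  refine integrable_of_bounded_support ?_ (r⁻¹) ?_ (-a) 1 ?_
  · exact (((measurable_balF r).comp
      (continuous_norm.measurable.comp (measurable_add_const a)))).aestronglyMeasurable
  · intro z
    rw [abs_of_nonneg (balF_nonneg hr _)]; exact balF_le hr _
  · intro z hz
    rw [Metric.mem_closedBall, not_le, Complex.dist_eq, sub_neg_eq_add] at hz
    exact Set.indicator_of_notMem (fun h => absurd h.2 (not_le.2 hz)) _

lemma integral_annF_le {r : ℝ} (hr : 0 < r) :
    ∫ z : ℂ, annF r (‖z‖) ≤ 2 * π * max 1 (Real.log r⁻¹) := by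
  rw [radial]
  have hI : ∫ y in Ioi (0:ℝ), y * annF r y ≤ max 1 (Real.log r⁻¹) := by
    have heq : ∀ y ∈ Ioi (0:ℝ), y * annF r y = (Icc r 1).indicator (fun y => y⁻¹) y := by
      intro y hy
      unfold annF
      by_cases h : y ∈ Icc r 1
      · rw [Set.indicator_of_mem h, Set.indicator_of_mem h]
        have : y ≠ 0 := ne_of_gt (lt_of_lt_of_le hr h.1)
        field_simp
      · rw [Set.indicator_of_notMem h, Set.indicator_of_notMem h, mul_zero]
    rw [setIntegral_congr_fun measurableSet_Ioi heq, setIntegral_indicator measurableSet_Icc]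
    have hinter : Ioi (0:ℝ) ∩ Icc r 1 = Icc r 1 := by
      apply Set.inter_eq_self_of_subset_right
      intro y hy; exact lt_of_lt_of_le hr hy.1
    rw [hinter]
    by_cases hr1 : r ≤ 1
    · rw [MeasureTheory.integral_Icc_eq_integral_Ioc,
        ← intervalIntegral.integral_of_le hr1, integral_inv_of_pos hr one_pos, one_div]
      exact le_max_right _ _
    · rw [Set.Icc_eq_empty (fun h => hr1 h), setIntegral_empty]
      exact le_trans zero_le_one (le_max_left _ _)
  calc 2 * π * ∫ y in Ioi (0:ℝ), y * annF r y ≤ 2 * π * max 1 (Real.log r⁻¹) := by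
        apply mul_le_mul_of_nonneg_left hI (by positivity)

lemma integral_balF_le {r : ℝ} (hr : 0 < r) :
    ∫ z : ℂ, balF r (‖z‖) ≤ 2 * π := by
  rw [radial]
  have hI : ∫ y in Ioi (0:ℝ), y * balF r y ≤ 1 := by
    have heq : ∀ y ∈ Ioi (0:ℝ), y * balF r y = (Icc r 1).indicator (fun _ => (1:ℝ)) y := by
      intro y hy
      unfold balF
      by_cases h : y ∈ Icc r 1
      · rw [Set.indicator_of_mem h, Set.indicator_of_mem h]
        have : y ≠ 0 := ne_of_gt (lt_of_lt_of_le hr h.1)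
        field_simp
      · rw [Set.indicator_of_notMem h, Set.indicator_of_notMem h, mul_zero]
    rw [setIntegral_congr_fun measurableSet_Ioi heq, setIntegral_indicator measurableSet_Icc]
    have hinter : Ioi (0:ℝ) ∩ Icc r 1 = Icc r 1 := by
      apply Set.inter_eq_self_of_subset_right
      intro y hy; exact lt_of_lt_of_le hr hy.1
    rw [hinter, setIntegral_const, smul_eq_mul, mul_one, measureReal_def, Real.volume_Icc]
    by_cases hr1 : r ≤ 1
    · rw [ENNReal.toReal_ofReal (by linarith)]
      linarith
    · rw [ENNReal.ofReal_eq_zero.2 (by linarith)]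
      simp
  calc 2 * π * ∫ y in Ioi (0:ℝ), y * balF r y ≤ 2 * π * 1 := by
        apply mul_le_mul_of_nonneg_left hI (by positivity)
    _ = 2 * π := mul_one _

lemma phase_conj_mul (u v : ℂ) (hu : u ≠ 0) (hv : v ≠ 0) :
    phase ((starRingEnd ℂ) u) * phase v =
      ((starRingEnd ℂ) u * v) / ((‖u‖ * ‖v‖ : ℝ) : ℂ) := by
  unfold phase
  rw [if_neg (by simpa using hu), if_neg hv, Complex.norm_conj]
  push_cast
  rw [div_mul_div_comm]

set_option maxHeartbeats 1000000 in
lemma key_estimates (u v : ℂ) (hu : u ≠ 0) (hv : v ≠ 0) :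
    (phase ((starRingEnd ℂ) u) * phase v).re ≤ 1 ∧
    (‖u - v‖ ≤ max (‖u‖) (‖v‖) →
      1 - (phase ((starRingEnd ℂ) u) * phase v).re ≤
        ‖u - v‖ ^ 2 / max (‖u‖) (‖v‖) ^ 2) ∧
    |(phase ((starRingEnd ℂ) u) * phase v).im| ≤
      ‖u - v‖ / max (‖u‖) (‖v‖) := by
  set A := ‖u‖ with hA
  set B := ‖v‖ with hB
  set D := ‖u - v‖ with hD
  set m := min A B with hm
  set M := max A B with hM
  set w := (starRingEnd ℂ) u * v with hw
  have hApos : 0 < A := by simpa [hA] using hu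
  have hBpos : 0 < B := by simpa [hB] using hv
  have hmpos : 0 < m := lt_min hApos hBpos
  have hMpos : 0 < M := lt_of_lt_of_le hApos (le_max_left _ _)
  have hDnn : 0 ≤ D := norm_nonneg _
  have habsw : ‖w‖ = A * B := by rw [hw, norm_mul, Complex.norm_conj]
  have hmM : m * M = A * B := min_mul_max A B
  have hre : (phase ((starRingEnd ℂ) u) * phase v).re = w.re / (A * B) := by
    rw [phase_conj_mul u v hu hv, Complex.div_ofReal_re]
  have him : (phase ((starRingEnd ℂ) u) * phase v).im = w.im / (A * B) := by
    rw [phase_conj_mul u v hu hv, Complex.div_ofReal_im]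
  have hABpos : 0 < A * B := mul_pos hApos hBpos
  -- decompositions of w
  have hdecompA : w = (starRingEnd ℂ) u * (v - u) + ((Complex.normSq u : ℝ) : ℂ) := by
    rw [Complex.normSq_eq_conj_mul_self]
    ring
  have hdecompB : w = (starRingEnd ℂ) (u - v) * v + ((Complex.normSq v : ℝ) : ℂ) := by
    rw [Complex.normSq_eq_conj_mul_self, map_sub]
    ring
  have himA : |w.im| ≤ A * D := by
    have h1 : w.im = ((starRingEnd ℂ) u * (v - u)).im := by
      rw [hdecompA, Complex.add_im, Complex.ofReal_im, add_zero]
    rw [h1]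
    calc |((starRingEnd ℂ) u * (v - u)).im| ≤ ‖(starRingEnd ℂ) u * (v - u)‖ :=
          Complex.abs_im_le_norm _
      _ = A * D := by rw [norm_mul, Complex.norm_conj, ← hA, norm_sub_rev, ← hD]
  have himB : |w.im| ≤ B * D := by
    have h1 : w.im = ((starRingEnd ℂ) (u - v) * v).im := by
      rw [hdecompB, Complex.add_im, Complex.ofReal_im, add_zero]
    rw [h1]
    calc |((starRingEnd ℂ) (u - v) * v).im| ≤ ‖(starRingEnd ℂ) (u - v) * v‖ :=
          Complex.abs_im_le_norm _
      _ = D * B := by rw [norm_mul, Complex.norm_conj]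
      _ = B * D := mul_comm _ _
  have himm : |w.im| ≤ m * D := by
    rcases min_cases A B with ⟨h1, _⟩ | ⟨h1, _⟩
    · rw [← hm] at h1; rw [h1]; exact himA
    · rw [← hm] at h1; rw [h1]; exact himB
  have hrelew : w.re ≤ A * B := le_trans (Complex.re_le_norm w) (le_of_eq habsw)
  have hsq : (A * B) ^ 2 = w.re ^ 2 + w.im ^ 2 := by
    have h1 := Complex.sq_norm w
    rw [habsw, Complex.normSq_apply] at h1
    nlinarith [h1]
  clear_value A B D m M w
  refine ⟨?_, ?_, ?_⟩
  · rw [hre]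
    exact div_le_one_of_le₀ hrelew hABpos.le
  · intro hDM
    -- nonnegativity of w.re
    have hwre : 0 ≤ w.re := by
      rcases max_cases A B with ⟨h1, h2⟩ | ⟨h1, h2⟩
      · -- M = A, B ≤ A, D ≤ M = A
        rw [← hM] at h1
        have hDA : D ≤ A := by rw [← h1]; exact hDM
        have : w.re = ((starRingEnd ℂ) u * (v - u)).re + Complex.normSq u := by
          rw [hdecompA, Complex.add_re, Complex.ofReal_re]
        rw [this, Complex.normSq_eq_norm_sq, ← hA]
        have hge : -(A * D) ≤ ((starRingEnd ℂ) u * (v - u)).re := by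
          have := Complex.abs_re_le_norm ((starRingEnd ℂ) u * (v - u))
          have he : ‖(starRingEnd ℂ) u * (v - u)‖ = A * D := by
            rw [norm_mul, Complex.norm_conj, ← hA, norm_sub_rev, ← hD]
          rw [he] at this
          linarith [abs_le.1 this]
        nlinarith
      · rw [← hM] at h1
        have hDB : D ≤ B := by rw [← h1]; exact hDM
        have : w.re = ((starRingEnd ℂ) (u - v) * v).re + Complex.normSq v := by
          rw [hdecompB, Complex.add_re, Complex.ofReal_re]
        rw [this, Complex.normSq_eq_norm_sq, ← hB]
        have hge : -(D * B) ≤ ((starRingEnd ℂ) (u - v) * v).re := by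
          have := Complex.abs_re_le_norm ((starRingEnd ℂ) (u - v) * v)
          have he : ‖(starRingEnd ℂ) (u - v) * v‖ = D * B := by
            rw [norm_mul, Complex.norm_conj, ← hD, ← hB]
          rw [he] at this
          linarith [abs_le.1 this]
        nlinarith
    rw [hre]
    -- (AB - w.re) * (AB) ≤ w.im^2 ≤ (m*D)^2
    have h4 : 0 ≤ A * B - w.re := sub_nonneg.2 hrelew
    have hkey : (A * B - w.re) * (A * B) ≤ (m * D) ^ 2 := by
      have h2 : (A * B - w.re) * (A * B + w.re) = w.im ^ 2 := by linear_combination hsq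
      have h3 : w.im ^ 2 ≤ (m * D) ^ 2 := by
        have h5 : |w.im| ^ 2 ≤ (m * D) ^ 2 := pow_le_pow_left₀ (abs_nonneg _) himm 2
        rwa [sq_abs] at h5
      calc (A * B - w.re) * (A * B) ≤ (A * B - w.re) * (A * B + w.re) :=
            mul_le_mul_of_nonneg_left (by linarith) h4
        _ = w.im ^ 2 := h2
        _ ≤ (m * D) ^ 2 := h3
    have hgoal : 1 - w.re / (A * B) = (A * B - w.re) / (A * B) := by field_simp
    rw [hgoal]
    rw [div_le_div_iff₀ hABpos (by positivity)]
    -- goal : (A*B - w.re) * M^2 ≤ D^2 * (A*B)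
    rw [← hmM] at hkey ⊢
    -- hkey : (m*M - wre) * (m*M) ≤ (m*D)^2
    have h6 : (m * M - w.re) * M ≤ m * D ^ 2 := by
      have h7 : m * ((m * M - w.re) * M) ≤ m * (m * D ^ 2) := by nlinarith [hkey]
      exact le_of_mul_le_mul_left h7 hmpos
    calc (m * M - w.re) * M ^ 2 = ((m * M - w.re) * M) * M := by ring
      _ ≤ (m * D ^ 2) * M := mul_le_mul_of_nonneg_right h6 hMpos.le
      _ = D ^ 2 * (m * M) := by ring
  · rw [him, abs_div, abs_of_pos hABpos, div_le_div_iff₀ hABpos hMpos]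
    calc |w.im| * M ≤ (m * D) * M := mul_le_mul_of_nonneg_right himm hMpos.le
      _ = D * (m * M) := by ring
      _ = D * (A * B) := by rw [hmM]

lemma ae_add_ne (c : ℂ) : ∀ᵐ z : ℂ, z + c ≠ 0 := by
  rw [ae_iff]
  have hs : {z : ℂ | ¬ z + c ≠ 0} = {-c} := by
    ext z
    simp [add_eq_zero_iff_eq_neg]
  rw [hs]
  refine measure_mono_null (fun z hz => ?_) (?_ : volume (Metric.closedBall (-c) 0) = 0)
  · rw [Set.mem_singleton_iff] at hz
    simp [hz]
  · rw [Complex.volume_closedBall]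
    simp

lemma integrable_integrand (a b : ℂ) :
    Integrable (fun z : ℂ =>
      phase ((starRingEnd ℂ) (z + a)) * phase (z + b) * ((gauss z : ℝ) : ℂ)) := by
  apply Integrable.mono' integrable_gauss
  · apply Measurable.aestronglyMeasurable
    apply Measurable.mul
    apply Measurable.mul
    · exact measurable_phase.comp (Complex.continuous_conj.measurable.comp (measurable_add_const a))
    · exact measurable_phase.comp (measurable_add_const b)
    · exact Complex.continuous_ofReal.measurable.comp
        (Real.measurable_exp.comp ((continuous_norm.measurable.comp measurable_id).pow_const 2).neg)
  · refine ae_of_all _ fun z => ?_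
    rw [norm_mul, norm_mul, abs_phase, abs_phase, Complex.norm_real, Real.norm_eq_abs,
      one_mul, one_mul, abs_of_nonneg (gauss_pos z).le]

lemma Gfun_re (a b : ℂ) :
    (Gfun a b).re = π⁻¹ *
      ∫ z : ℂ, (1 - (phase ((starRingEnd ℂ) (z + a)) * phase (z + b)).re) * gauss z := by
  have hInt := integrable_integrand a b
  have hre := integral_re hInt
  simp only [RCLike.re_to_complex] at hre
  have hfre : ∀ z : ℂ, (phase ((starRingEnd ℂ) (z + a)) * phase (z + b) * ((gauss z : ℝ) : ℂ)).re
      = (phase ((starRingEnd ℂ) (z + a)) * phase (z + b)).re * gauss z := by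
    intro z
    simp [Complex.mul_re]
  have hIntre : Integrable (fun z : ℂ =>
      (phase ((starRingEnd ℂ) (z + a)) * phase (z + b)).re * gauss z) := by
    have := hInt.re
    simpa only [RCLike.re_to_complex, hfre] using this
  rw [show Gfun a b = 1 - (1/(π:ℂ)) *
      ∫ z : ℂ, phase ((starRingEnd ℂ) (z + a)) * phase (z + b) * ((gauss z : ℝ) : ℂ) from rfl]
  rw [Complex.sub_re, Complex.one_re, show (1/(π:ℂ)) = ((π⁻¹ : ℝ) : ℂ) by push_cast; rw [one_div],
    Complex.re_ofReal_mul, ← hre]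
  rw [show (∫ z : ℂ, (phase ((starRingEnd ℂ) (z + a)) * phase (z + b) *
      ((gauss z : ℝ) : ℂ)).re) =
    ∫ z : ℂ, (phase ((starRingEnd ℂ) (z + a)) * phase (z + b)).re * gauss z
    from integral_congr_ae (ae_of_all _ hfre)]
  have hsplit : (∫ z : ℂ, (1 - (phase ((starRingEnd ℂ) (z + a)) * phase (z + b)).re) *
        gauss z) =
      (∫ z : ℂ, gauss z) -
        ∫ z : ℂ, (phase ((starRingEnd ℂ) (z + a)) * phase (z + b)).re * gauss z := by
    rw [← integral_sub integrable_gauss hIntre]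
    exact integral_congr_ae (ae_of_all _ fun z => by ring)
  rw [hsplit, integral_gauss, mul_sub, inv_mul_cancel₀ Real.pi_ne_zero]

lemma Gfun_im (a b : ℂ) :
    (Gfun a b).im = -π⁻¹ *
      ∫ z : ℂ, (phase ((starRingEnd ℂ) (z + a)) * phase (z + b)).im * gauss z := by
  have hInt := integrable_integrand a b
  have him := integral_im hInt
  simp only [RCLike.im_to_complex] at him
  have hfim : ∀ z : ℂ, (phase ((starRingEnd ℂ) (z + a)) * phase (z + b) * ((gauss z : ℝ) : ℂ)).im
      = (phase ((starRingEnd ℂ) (z + a)) * phase (z + b)).im * gauss z := by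
    intro z
    simp [Complex.mul_im]
  rw [show Gfun a b = 1 - (1/(π:ℂ)) *
      ∫ z : ℂ, phase ((starRingEnd ℂ) (z + a)) * phase (z + b) * ((gauss z : ℝ) : ℂ) from rfl]
  rw [Complex.sub_im, Complex.one_im, show (1/(π:ℂ)) = ((π⁻¹ : ℝ) : ℂ) by push_cast; rw [one_div],
    Complex.im_ofReal_mul, ← him]
  rw [show (∫ z : ℂ, (phase ((starRingEnd ℂ) (z + a)) * phase (z + b) *
      ((gauss z : ℝ) : ℂ)).im) =
    ∫ z : ℂ, (phase ((starRingEnd ℂ) (z + a)) * phase (z + b)).im * gauss z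
    from integral_congr_ae (ae_of_all _ hfim)]
  ring

set_option maxHeartbeats 1000000 in
lemma re_part (a b : ℂ) (hab : a ≠ b) :
    |(Gfun a b).re| ≤ 8 * ‖a - b‖ ^ 2 * max 1 (Real.log ((‖a - b‖)⁻¹)) := by
  have hRe := Gfun_re a b
  set r := ‖a - b‖ with hr
  have hrpos : 0 < r := by
    rw [hr]
    simpa [sub_eq_zero] using hab
  set L := max 1 (Real.log r⁻¹) with hL
  have hL1 : 1 ≤ L := le_max_left _ _
  set g1 := fun z : ℂ => (1 - (phase ((starRingEnd ℂ) (z + a)) * phase (z + b)).re) * gauss z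
    with hg1
  have habsP : ∀ z : ℂ, ‖phase ((starRingEnd ℂ) (z + a)) * phase (z + b)‖ = 1 :=
    fun z => by rw [norm_mul, abs_phase, abs_phase, one_mul]
  have hnonneg : ∀ z, 0 ≤ g1 z := by
    intro z
    apply mul_nonneg _ (gauss_pos z).le
    have h1 := Complex.re_le_norm (phase ((starRingEnd ℂ) (z + a)) * phase (z + b))
    rw [habsP z] at h1
    linarith
  have h2 : Integrable (fun z : ℂ =>
      (phase ((starRingEnd ℂ) (z + a)) * phase (z + b)).re * gauss z) := by
    apply (integrable_integrand a b).re.congr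
    exact ae_of_all _ fun z => by simp [Complex.mul_re]
  have hIntg1 : Integrable g1 := by
    apply (integrable_gauss.sub h2).congr
    exact ae_of_all _ fun z => by simp only [Pi.sub_apply]; rw [hg1]; ring
  set BR := fun z : ℂ => (Metric.ball (-a) r).indicator (fun _ => (2:ℝ)) z +
      r^2 * (annF r (‖z + a‖) + annF r (‖z + b‖) + 2 * gauss z) with hBR
  have hIntInner : Integrable (fun z : ℂ =>
      annF r (‖z + a‖) + annF r (‖z + b‖) + 2 * gauss z) :=
    ((integrable_annF_comp hrpos a).add (integrable_annF_comp hrpos b)).add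
      (integrable_gauss.const_mul 2)
  have hIntBR : Integrable BR := by
    apply Integrable.add
    · rw [integrable_indicator_iff measurableSet_ball]
      exact integrableOn_const measure_ball_lt_top.ne
    · exact hIntInner.const_mul (r^2)
  have hb : ∀ᵐ z : ℂ, g1 z ≤ BR z := by
    filter_upwards [ae_add_ne a, ae_add_ne b] with z hza hzb
    have hBnn1 : 0 ≤ (Metric.ball (-a) r).indicator (fun _ => (2:ℝ)) z :=
      Set.indicator_nonneg (fun _ _ => by norm_num) _
    obtain ⟨hre1, hre2, him3⟩ := key_estimates (z + a) (z + b) hza hzb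
    have hd : z + a - (z + b) = a - b := by ring
    rw [hd, ← hr] at hre2
    set M := max (‖z + a‖) (‖z + b‖) with hM
    have hanb : 0 ≤ annF r (‖z + b‖) := annF_nonneg hrpos _
    have hana : 0 ≤ annF r (‖z + a‖) := annF_nonneg hrpos _
    have hgz := gauss_pos z
    have hgz1 := gauss_le_one z
    by_cases hcase : M < r
    · have hmem : z ∈ Metric.ball (-a) r := by
        rw [Metric.mem_ball, Complex.dist_eq, sub_neg_eq_add]
        exact lt_of_le_of_lt (le_max_left _ _) hcase
      have hindic : (Metric.ball (-a) r).indicator (fun _ => (2:ℝ)) z = 2 :=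
        Set.indicator_of_mem hmem _
      have hrebound : -1 ≤ (phase ((starRingEnd ℂ) (z + a)) * phase (z + b)).re := by
        have h1 := Complex.abs_re_le_norm (phase ((starRingEnd ℂ) (z + a)) * phase (z + b))
        rw [habsP z] at h1
        linarith [abs_le.1 h1]
      have h1 : g1 z ≤ 2 := by
        rw [hg1]
        calc (1 - (phase ((starRingEnd ℂ) (z + a)) * phase (z + b)).re) * gauss z
            ≤ 2 * gauss z := by nlinarith
          _ ≤ 2 := by nlinarith
      have h3 : 0 ≤ r^2 * (annF r (‖z + a‖) + annF r (‖z + b‖) +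
          2 * gauss z) := by positivity
      rw [hBR]
      simp only
      rw [hindic]
      linarith
    · push_neg at hcase
      have hM0 : 0 < M := lt_of_lt_of_le hrpos hcase
      have hkey := hre2 hcase
      have hg1le : g1 z ≤ r^2 / M^2 * gauss z := by
        rw [hg1]
        exact mul_le_mul_of_nonneg_right hkey (gauss_pos z).le
      have hfinal : r^2 / M^2 * gauss z ≤
          r^2 * (annF r (‖z + a‖) + annF r (‖z + b‖) + 2 * gauss z) := by
        rcases max_cases (‖z + a‖) (‖z + b‖) with ⟨hMa, _⟩ | ⟨hMb, _⟩
        · rw [← hM] at hMa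
          by_cases hle1 : ‖z + a‖ ≤ 1
          · have hmem2 : ‖z + a‖ ∈ Icc r 1 :=
              Set.mem_Icc.2 ⟨by rw [← hMa]; exact hcase, hle1⟩
            have hann : annF r (‖z + a‖) = ((‖z + a‖)^2)⁻¹ := by
              unfold annF; exact Set.indicator_of_mem hmem2 _
            have step : r^2 / M^2 * gauss z ≤ r^2 * annF r (‖z + a‖) := by
              rw [hann, ← hMa]
              calc r^2 / M^2 * gauss z ≤ r^2 / M^2 * 1 :=
                    mul_le_mul_of_nonneg_left hgz1 (by positivity)
                _ = r^2 * (M^2)⁻¹ := by rw [mul_one, div_eq_mul_inv]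
            nlinarith [sq_nonneg r]
          · push_neg at hle1
            have hM1 : 1 ≤ M^2 := by nlinarith [hMa]
            have step : r^2 / M^2 * gauss z ≤ r^2 * (2 * gauss z) := by
              have h5 : r^2 / M^2 ≤ r^2 := by
                apply div_le_self (sq_nonneg r) hM1
              nlinarith
            nlinarith [sq_nonneg r]
        · rw [← hM] at hMb
          by_cases hle1 : ‖z + b‖ ≤ 1
          · have hmem2 : ‖z + b‖ ∈ Icc r 1 :=
              Set.mem_Icc.2 ⟨by rw [← hMb]; exact hcase, hle1⟩
            have hann : annF r (‖z + b‖) = ((‖z + b‖)^2)⁻¹ := by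
              unfold annF; exact Set.indicator_of_mem hmem2 _
            have step : r^2 / M^2 * gauss z ≤ r^2 * annF r (‖z + b‖) := by
              rw [hann, ← hMb]
              calc r^2 / M^2 * gauss z ≤ r^2 / M^2 * 1 :=
                    mul_le_mul_of_nonneg_left hgz1 (by positivity)
                _ = r^2 * (M^2)⁻¹ := by rw [mul_one, div_eq_mul_inv]
            nlinarith [sq_nonneg r]
          · push_neg at hle1
            have hM1 : 1 ≤ M^2 := by nlinarith [hMb]
            have step : r^2 / M^2 * gauss z ≤ r^2 * (2 * gauss z) := by
              have h5 : r^2 / M^2 ≤ r^2 := by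
                apply div_le_self (sq_nonneg r) hM1
              nlinarith
            nlinarith [sq_nonneg r]
      rw [hBR]
      simp only
      linarith
  have hint : ∫ z, g1 z ≤ ∫ z, BR z := integral_mono_ae hIntg1 hIntBR hb
  have hBRval : ∫ z, BR z ≤ 2 * (π * r^2) + r^2 * (2*π*L + 2*π*L + 2*π) := by
    rw [hBR]
    rw [integral_add (by
      rw [integrable_indicator_iff measurableSet_ball]
      exact integrableOn_const measure_ball_lt_top.ne) (hIntInner.const_mul (r^2))]
    have hind : ∫ z : ℂ, (Metric.ball (-a) r).indicator (fun _ => (2:ℝ)) z = 2 * (π * r^2) := by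
      rw [integral_indicator_const _ measurableSet_ball, measureReal_def, Complex.volume_ball]
      rw [ENNReal.toReal_mul, ENNReal.toReal_pow, ENNReal.toReal_ofReal hrpos.le]
      simp [smul_eq_mul]
      ring
    rw [hind, integral_const_mul]
    apply add_le_add_right
    apply mul_le_mul_of_nonneg_left _ (sq_nonneg r)
    have hIntAB : Integrable (fun z : ℂ =>
        annF r (‖z + a‖) + annF r (‖z + b‖)) :=
      (integrable_annF_comp hrpos a).add (integrable_annF_comp hrpos b)
    have hInt2g : Integrable (fun z : ℂ => 2 * gauss z) := integrable_gauss.const_mul 2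
    rw [integral_add hIntAB hInt2g,
      integral_add (integrable_annF_comp hrpos a) (integrable_annF_comp hrpos b),
      integral_const_mul, integral_gauss]
    have ht1 : ∫ z : ℂ, annF r (‖z + a‖) = ∫ z : ℂ, annF r (‖z‖) :=
      integral_add_right_eq_self (fun z => annF r (‖z‖)) a
    have ht2 : ∫ z : ℂ, annF r (‖z + b‖) = ∫ z : ℂ, annF r (‖z‖) :=
      integral_add_right_eq_self (fun z => annF r (‖z‖)) b
    rw [ht1, ht2]
    have := integral_annF_le hrpos
    rw [← hL] at this
    linarith [pi_pos]
  have h0 : 0 ≤ ∫ z, g1 z := integral_nonneg hnonneg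
  rw [hRe, abs_of_nonneg (mul_nonneg (inv_nonneg.2 pi_pos.le) h0)]
  calc π⁻¹ * ∫ z, g1 z ≤ π⁻¹ * (2 * (π * r^2) + r^2 * (2*π*L + 2*π*L + 2*π)) :=
        mul_le_mul_of_nonneg_left (le_trans hint hBRval) (inv_nonneg.2 pi_pos.le)
    _ = π⁻¹ * π * (r^2 * (4 + 4*L)) := by ring
    _ = r^2 * (4 + 4*L) := by rw [inv_mul_cancel₀ pi_ne_zero, one_mul]
    _ ≤ 8 * r^2 * L := by nlinarith [sq_nonneg r]

set_option maxHeartbeats 1000000 in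
lemma im_part (a b : ℂ) (hab : a ≠ b) :
    |(Gfun a b).im| ≤ 8 * ‖a - b‖ := by
  have hIm := Gfun_im a b
  set r := ‖a - b‖ with hr
  have hrpos : 0 < r := by
    rw [hr]
    simpa [sub_eq_zero] using hab
  set g1 := fun z : ℂ => (phase ((starRingEnd ℂ) (z + a)) * phase (z + b)).im * gauss z with hg1
  have habsP : ∀ z : ℂ, ‖phase ((starRingEnd ℂ) (z + a)) * phase (z + b)‖ = 1 :=
    fun z => by rw [norm_mul, abs_phase, abs_phase, one_mul]
  have hIntg1 : Integrable g1 := by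
    apply (integrable_integrand a b).im.congr
    refine ae_of_all _ fun z => ?_
    simp only [RCLike.im_to_complex, Complex.mul_im, Complex.ofReal_re, Complex.ofReal_im,
      mul_zero, zero_mul, add_zero, mul_one, zero_add]
    rfl
  have habsg1 : ∀ z, |g1 z| = |(phase ((starRingEnd ℂ) (z + a)) * phase (z + b)).im| * gauss z := by
    intro z
    rw [hg1, abs_mul, abs_of_nonneg (gauss_pos z).le]
  have hg1_le_gauss : ∀ z, |g1 z| ≤ gauss z := by
    intro z
    rw [habsg1 z]
    have h1 := Complex.abs_im_le_norm (phase ((starRingEnd ℂ) (z + a)) * phase (z + b))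
    rw [habsP z] at h1
    nlinarith [gauss_pos z]
  have hIabs : |∫ z, g1 z| ≤ ∫ z, |g1 z| := by
    have := norm_integral_le_integral_norm g1 (μ := volume)
    simpa [Real.norm_eq_abs] using this
  have hstart : |(Gfun a b).im| = π⁻¹ * |∫ z, g1 z| := by
    rw [hIm, abs_mul, abs_neg, abs_of_nonneg (inv_nonneg.2 pi_pos.le)]
  by_cases hr1 : r ≤ 1
  · set BI := fun z : ℂ => (Metric.ball (-a) r).indicator (fun _ => (1:ℝ)) z +
        r * (balF r (‖z + a‖) + balF r (‖z + b‖) + 2 * gauss z) with hBI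
    have hIntInner : Integrable (fun z : ℂ =>
        balF r (‖z + a‖) + balF r (‖z + b‖) + 2 * gauss z) :=
      ((integrable_balF_comp hrpos a).add (integrable_balF_comp hrpos b)).add
        (integrable_gauss.const_mul 2)
    have hIntBI : Integrable BI := by
      apply Integrable.add
      · rw [integrable_indicator_iff measurableSet_ball]
        exact integrableOn_const measure_ball_lt_top.ne
      · exact hIntInner.const_mul r
    have hb : ∀ᵐ z : ℂ, |g1 z| ≤ BI z := by
      filter_upwards [ae_add_ne a, ae_add_ne b] with z hza hzb
      have hBnn1 : 0 ≤ (Metric.ball (-a) r).indicator (fun _ => (1:ℝ)) z :=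
        Set.indicator_nonneg (fun _ _ => by norm_num) _
      obtain ⟨_, _, him3⟩ := key_estimates (z + a) (z + b) hza hzb
      have hd : z + a - (z + b) = a - b := by ring
      rw [hd, ← hr] at him3
      set M := max (‖z + a‖) (‖z + b‖) with hM
      have hanb : 0 ≤ balF r (‖z + b‖) := balF_nonneg hrpos _
      have hana : 0 ≤ balF r (‖z + a‖) := balF_nonneg hrpos _
      have hgz := gauss_pos z
      have hgz1 := gauss_le_one z
      by_cases hcase : M < r
      · have hmem : z ∈ Metric.ball (-a) r := by
          rw [Metric.mem_ball, Complex.dist_eq, sub_neg_eq_add]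
          exact lt_of_le_of_lt (le_max_left _ _) hcase
        have hindic : (Metric.ball (-a) r).indicator (fun _ => (1:ℝ)) z = 1 :=
          Set.indicator_of_mem hmem _
        have h3 : 0 ≤ r * (balF r (‖z + a‖) + balF r (‖z + b‖) +
            2 * gauss z) := by positivity
        rw [hBI]
        simp only
        rw [hindic]
        have := hg1_le_gauss z
        linarith
      · push_neg at hcase
        have hM0 : 0 < M := lt_of_lt_of_le hrpos hcase
        have hg1le : |g1 z| ≤ r / M * gauss z := by
          rw [habsg1 z]
          exact mul_le_mul_of_nonneg_right him3 (gauss_pos z).le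
        have hfinal : r / M * gauss z ≤
            r * (balF r (‖z + a‖) + balF r (‖z + b‖) + 2 * gauss z) := by
          rcases max_cases (‖z + a‖) (‖z + b‖) with ⟨hMa, _⟩ | ⟨hMb, _⟩
          · rw [← hM] at hMa
            by_cases hle1 : ‖z + a‖ ≤ 1
            · have hmem2 : ‖z + a‖ ∈ Icc r 1 :=
                Set.mem_Icc.2 ⟨by rw [← hMa]; exact hcase, hle1⟩
              have hann : balF r (‖z + a‖) = (‖z + a‖)⁻¹ := by
                unfold balF; exact Set.indicator_of_mem hmem2 _
              have step : r / M * gauss z ≤ r * balF r (‖z + a‖) := by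
                rw [hann, ← hMa]
                calc r / M * gauss z ≤ r / M * 1 :=
                      mul_le_mul_of_nonneg_left hgz1 (by positivity)
                  _ = r * M⁻¹ := by rw [mul_one, div_eq_mul_inv]
              nlinarith
            · push_neg at hle1
              have hM1 : 1 ≤ M := le_of_lt (lt_of_lt_of_le hle1 (le_of_eq hMa.symm))
              have step : r / M * gauss z ≤ r * (2 * gauss z) := by
                have h5 : r / M ≤ r := div_le_self hrpos.le hM1
                nlinarith
              nlinarith
          · rw [← hM] at hMb
            by_cases hle1 : ‖z + b‖ ≤ 1
            · have hmem2 : ‖z + b‖ ∈ Icc r 1 :=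
                Set.mem_Icc.2 ⟨by rw [← hMb]; exact hcase, hle1⟩
              have hann : balF r (‖z + b‖) = (‖z + b‖)⁻¹ := by
                unfold balF; exact Set.indicator_of_mem hmem2 _
              have step : r / M * gauss z ≤ r * balF r (‖z + b‖) := by
                rw [hann, ← hMb]
                calc r / M * gauss z ≤ r / M * 1 :=
                      mul_le_mul_of_nonneg_left hgz1 (by positivity)
                  _ = r * M⁻¹ := by rw [mul_one, div_eq_mul_inv]
              nlinarith
            · push_neg at hle1
              have hM1 : 1 ≤ M := le_of_lt (lt_of_lt_of_le hle1 (le_of_eq hMb.symm))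
              have step : r / M * gauss z ≤ r * (2 * gauss z) := by
                have h5 : r / M ≤ r := div_le_self hrpos.le hM1
                nlinarith
              nlinarith
        rw [hBI]
        simp only
        linarith
    have hint : ∫ z, |g1 z| ≤ ∫ z, BI z := integral_mono_ae hIntg1.abs hIntBI hb
    have hBIval : ∫ z, BI z ≤ π * r^2 + r * (2*π + 2*π + 2*π) := by
      rw [hBI]
      rw [integral_add (by
        rw [integrable_indicator_iff measurableSet_ball]
        exact integrableOn_const measure_ball_lt_top.ne) (hIntInner.const_mul r)]
      have hind : ∫ z : ℂ, (Metric.ball (-a) r).indicator (fun _ => (1:ℝ)) z = π * r^2 := by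
        rw [integral_indicator_const _ measurableSet_ball, measureReal_def, Complex.volume_ball]
        rw [ENNReal.toReal_mul, ENNReal.toReal_pow, ENNReal.toReal_ofReal hrpos.le]
        simp [smul_eq_mul]
        ring
      rw [hind, integral_const_mul]
      apply add_le_add_right
      apply mul_le_mul_of_nonneg_left _ hrpos.le
      have hIntAB : Integrable (fun z : ℂ =>
          balF r (‖z + a‖) + balF r (‖z + b‖)) :=
        (integrable_balF_comp hrpos a).add (integrable_balF_comp hrpos b)
      have hInt2g : Integrable (fun z : ℂ => 2 * gauss z) := integrable_gauss.const_mul 2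
      rw [integral_add hIntAB hInt2g,
        integral_add (integrable_balF_comp hrpos a) (integrable_balF_comp hrpos b),
        integral_const_mul, integral_gauss]
      have ht1 : ∫ z : ℂ, balF r (‖z + a‖) = ∫ z : ℂ, balF r (‖z‖) :=
        integral_add_right_eq_self (fun z => balF r (‖z‖)) a
      have ht2 : ∫ z : ℂ, balF r (‖z + b‖) = ∫ z : ℂ, balF r (‖z‖) :=
        integral_add_right_eq_self (fun z => balF r (‖z‖)) b
      rw [ht1, ht2]
      have := integral_balF_le hrpos
      linarith [pi_pos]
    rw [hstart]
    calc π⁻¹ * |∫ z, g1 z| ≤ π⁻¹ * (π * r^2 + r * (2*π + 2*π + 2*π)) := by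
          apply mul_le_mul_of_nonneg_left _ (inv_nonneg.2 pi_pos.le)
          exact le_trans hIabs (le_trans hint hBIval)
      _ = π⁻¹ * π * (r^2 + 6*r) := by ring
      _ = r^2 + 6*r := by rw [inv_mul_cancel₀ pi_ne_zero, one_mul]
      _ ≤ 8 * r := by nlinarith
  · push_neg at hr1
    have hIg : ∫ z, |g1 z| ≤ π := by
      have := integral_mono_ae hIntg1.abs integrable_gauss (ae_of_all _ hg1_le_gauss)
      rw [integral_gauss] at this
      exact this
    rw [hstart]
    calc π⁻¹ * |∫ z, g1 z| ≤ π⁻¹ * π := by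
          apply mul_le_mul_of_nonneg_left (le_trans hIabs hIg) (inv_nonneg.2 pi_pos.le)
      _ = 1 := inv_mul_cancel₀ pi_ne_zero
      _ ≤ 8 * r := by nlinarith

lemma Gfun_diag (a : ℂ) : Gfun a a = 0 := by
  have hI : (∫ z : ℂ, phase ((starRingEnd ℂ) (z + a)) * phase (z + a) *
      ((Real.exp (-‖z‖ ^ 2) : ℝ) : ℂ)) = ((π : ℝ) : ℂ) := by
    have h1 : ∀ᵐ z : ℂ, phase ((starRingEnd ℂ) (z + a)) * phase (z + a) *
        ((Real.exp (-‖z‖ ^ 2) : ℝ) : ℂ) = ((gauss z : ℝ) : ℂ) := by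
      filter_upwards [ae_add_ne a] with z hz
      rw [phase_conj_mul _ _ hz hz]
      have h2 : (starRingEnd ℂ) (z + a) * (z + a) =
          ((‖z + a‖ * ‖z + a‖ : ℝ) : ℂ) := by
        rw [← Complex.normSq_eq_conj_mul_self, Complex.normSq_eq_norm_sq]
        push_cast
        ring
      rw [h2, div_self (by
        simp only [ne_eq, Complex.ofReal_eq_zero]
        exact (mul_pos (norm_pos_iff.2 hz) (norm_pos_iff.2 hz)).ne'), one_mul]
      rfl
    rw [integral_congr_ae h1]
    rw [show (∫ z : ℂ, ((gauss z : ℝ) : ℂ)) = (((∫ z : ℂ, gauss z) : ℝ) : ℂ) from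
      integral_ofReal, integral_gauss]
  unfold Gfun
  rw [hI, one_div, inv_mul_cancel₀ (Complex.ofReal_ne_zero.2 pi_ne_zero), sub_self]

/-- Proposition: |Re G(a,b)| ≤ c₁|a−b|² max(1, log(|a−b|⁻¹)) and |Im G(a,b)| ≤ c₁|a−b|. -/
theorem Gfun_bounds :
    ∃ c₁ : ℝ, 0 < c₁ ∧
      ∀ a b : ℂ,
        |(Gfun a b).re| ≤
            c₁ * ‖a - b‖ ^ 2 *
              max 1 (Real.log ((‖a - b‖)⁻¹)) ∧
        |(Gfun a b).im| ≤ c₁ * ‖a - b‖ := by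
  refine ⟨8, by norm_num, fun a b => ?_⟩
  by_cases hab : a = b
  · subst hab
    rw [Gfun_diag]
    simp
  · exact ⟨re_part a b hab, im_part a b hab⟩

end
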